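/- arXiv:1603.01859 — 5 statements merged into one kernel-verified Lean document; each statement's English description precedes it below -/
import Mathlib

section
/- Let G be a finite group of order 4t and let ψ be a normalized binary cocycle over G. Then the cocyclic matrix M_ψ = (ψ(g,h))_{g,h∈G} is a Hadamard matrix, i.e. M_ψ · M_ψᵀ = 4t·I, if and only if Σ_{h∈G} ψ(g,h) = 0 for every g ∈ G with g ≠ 1. -/
open Matrix
/-- A normalized binary cocycle `ψ` over a finite group `G` of order `4t`
yields a Hadamard cocyclic matrix iff every row other than the first sums to zero. -/
theorem cocyclic_hadamard_test {G : Type*} [Group G] [Fintype G] [DecidableEq G] (t : ℕ)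
    (hcard : Fintype.card G = 4 * t)
    (ψ : G → G → ℤ)
    (hpm : ∀ g h : G, ψ g h = 1 ∨ ψ g h = -1)
    (hcoc : ∀ g h k : G, ψ g h * ψ (g * h) k = ψ h k * ψ g (h * k))
    (hnorm : ∀ g : G, ψ 1 g = 1 ∧ ψ g 1 = 1) :
    (Matrix.of ψ) * (Matrix.of ψ)ᵀ = (4 * t : ℤ) • (1 : Matrix G G ℤ) ↔
      ∀ g : G, g ≠ 1 → ∑ h : G, ψ g h = 0 := by
  have sq : ∀ g h : G, ψ g h * ψ g h = 1 := by
    intro g h; rcases hpm g h with h1 | h1 <;> simp [h1]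
  have entry : ∀ g g' : G, ((Matrix.of ψ) * (Matrix.of ψ)ᵀ) g g'
      = ∑ h : G, ψ g h * ψ g' h := by
    intro g g'
    simp [Matrix.mul_apply, Matrix.transpose_apply]
  have key : ∀ g g' : G, ∑ h : G, ψ g h * ψ g' h
      = ψ (g * g'⁻¹) g' * ∑ k : G, ψ (g * g'⁻¹) k := by
    intro g g'
    set a := g * g'⁻¹ with ha
    have hg : g = a * g' := by rw [ha]; group
    have step : ∀ h : G, ψ g h * ψ g' h = ψ a g' * ψ a (g' * h) := by
      intro h
      have hc := hcoc a g' h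
      have s1 := sq a g'
      have s2 := sq g' h
      rw [hg]
      linear_combination (ψ a g' * ψ g' h) * hc - (ψ (a * g') h * ψ g' h) * s1
        + (ψ a g' * ψ a (g' * h)) * s2
    calc ∑ h : G, ψ g h * ψ g' h = ∑ h : G, ψ a g' * ψ a (g' * h) :=
          Finset.sum_congr rfl (fun h _ => step h)
      _ = ψ a g' * ∑ h : G, ψ a (g' * h) := by rw [Finset.mul_sum]
      _ = ψ a g' * ∑ k : G, ψ a k := by
          congr 1
          exact Fintype.sum_bijective (fun h => g' * h)
            (Group.mulLeft_bijective g') _ _ (fun h => rfl)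
  constructor
  · intro H g hg
    have := congrFun (congrFun H g) 1
    rw [entry] at this
    simp [Matrix.one_apply, hg] at this
    calc ∑ h : G, ψ g h = ∑ h : G, ψ g h * ψ 1 h := by
          refine Finset.sum_congr rfl (fun h _ => ?_)
          rw [(hnorm h).1, mul_one]
      _ = 0 := this
  · intro H
    ext g g'
    rw [entry, key]
    by_cases hgg : g = g'
    · subst hgg
      simp only [mul_inv_cancel]
      rw [(hnorm g).1, one_mul]
      have : ∑ k : G, ψ 1 k = (Fintype.card G : ℤ) := by
        rw [Fintype.card_eq_sum_ones]
        push_cast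
        exact Finset.sum_congr rfl (fun k _ => (hnorm k).1)
      rw [this, hcard]
      simp [Matrix.one_apply]
    · have ha : g * g'⁻¹ ≠ 1 := fun h => hgg (mul_inv_eq_one.mp h)
      rw [H _ ha, mul_zero]
      simp [Matrix.one_apply, hgg]
end

section
/- Let G be a finite group of order 4t with identity 1, and let I_G be the ideal of the polynomial ring ℚ[x_{i,j} : (i,j) ∈ G × G] generated by: (i) x_{i,j}² − 1 for all i,j ∈ G; (ii) x_{1,j} − 1 and x_{i,1} − 1 for all i,j ∈ G∖{1}; (iii) the polynomials p_{i,j,k} = x_{i,j} − x_{ij,k}·x_{j,k}·x_{i,jk} for all i,j,k ∈ G; and (iv) Σ_{j∈G} x_{i,j} for all i ∈ G∖{1}. Then a point a : G × G → ℚ lies in the affine variety V(I_G) (i.e., every polynomial of I_G vanishes at a) if and only if the function ψ(i,j) := a(i,j) is a normalized binary cocycle over G whose cocyclic matrix M_ψ is Hadamard. -/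
open Matrix MvPolynomial

/-- The ideal `I_G` of Theorem 1. -/
noncomputable def hadamardIdeal (G : Type*) [Group G] [Fintype G] :
    Ideal (MvPolynomial (G × G) ℚ) :=
  Ideal.span
    ({p | ∃ i j : G, p = X (i, j) ^ 2 - 1} ∪
     {p | ∃ j : G, j ≠ 1 ∧ p = X ((1 : G), j) - 1} ∪
     {p | ∃ i : G, i ≠ 1 ∧ p = X (i, (1 : G)) - 1} ∪
     {p | ∃ i j k : G, p = X (i, j) - X (i * j, k) * X (j, k) * X (i, j * k)} ∪
     {p | ∃ i : G, i ≠ 1 ∧ p = ∑ j : G, X (i, j)})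

/-- a point lies in `V(I_G)` iff it is a normalized binary cocycle
whose cocyclic matrix is Hadamard. -/
theorem mem_variety_hadamardIdeal_iff {G : Type*} [Group G] [Fintype G] [DecidableEq G]
    (t : ℕ) (hcard : Fintype.card G = 4 * t) (a : G × G → ℚ) :
    (∀ p ∈ hadamardIdeal G, eval a p = 0) ↔
      ∃ ψ : G → G → ℤ,
        (∀ i j : G, (ψ i j : ℚ) = a (i, j)) ∧
        (∀ g h : G, ψ g h = 1 ∨ ψ g h = -1) ∧
        (∀ g h k : G, ψ g h * ψ (g * h) k = ψ h k * ψ g (h * k)) ∧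
        (∀ g : G, ψ 1 g = 1 ∧ ψ g 1 = 1) ∧
        (Matrix.of ψ) * (Matrix.of ψ)ᵀ = (4 * t : ℤ) • (1 : Matrix G G ℤ) := by
  have ht : 0 < t := by
    rcases Nat.eq_zero_or_pos t with h | h
    · exfalso
      have : Fintype.card G ≠ 0 := Fintype.card_ne_zero
      omega
    · exact h
  have hcard2 : 1 < Fintype.card G := by omega
  constructor
  · intro hv
    have hgen : ∀ p ∈ ({p | ∃ i j : G, p = X (i, j) ^ 2 - 1} ∪
       {p | ∃ j : G, j ≠ 1 ∧ p = X ((1 : G), j) - 1} ∪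
       {p | ∃ i : G, i ≠ 1 ∧ p = X (i, (1 : G)) - 1} ∪
       {p | ∃ i j k : G, p = X (i, j) - X (i * j, k) * X (j, k) * X (i, j * k)} ∪
       {p | ∃ i : G, i ≠ 1 ∧ p = ∑ j : G, X (i, j)} :
         Set (MvPolynomial (G × G) ℚ)), eval a p = 0 :=
      fun p hp => hv p (Ideal.subset_span hp)
    -- squares
    have hsq : ∀ i j : G, a (i, j) ^ 2 = 1 := by
      intro i j
      have := hgen _ (Or.inl (Or.inl (Or.inl (Or.inl ⟨i, j, rfl⟩))))
      have h2 : a (i, j) ^ 2 - 1 = 0 := by simpa using this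
      linarith
    have hpm : ∀ i j : G, a (i, j) = 1 ∨ a (i, j) = -1 := fun i j =>
      sq_eq_one_iff.mp (hsq i j)
    -- cocycle relation in ℚ
    have hco : ∀ i j k : G, a (i, j) = a (i * j, k) * a (j, k) * a (i, j * k) := by
      intro i j k
      have := hgen _ (Or.inl (Or.inr ⟨i, j, k, rfl⟩))
      have h2 : a (i, j) - a (i * j, k) * a (j, k) * a (i, j * k) = 0 := by
        simpa using this
      linarith
    -- normalization
    have hn1 : ∀ j : G, j ≠ 1 → a (1, j) = 1 := by
      intro j hj
      have := hgen _ (Or.inl (Or.inl (Or.inl (Or.inr ⟨j, hj, rfl⟩))))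
      have h2 : a ((1 : G), j) - 1 = 0 := by simpa using this
      linarith
    have hn2 : ∀ i : G, i ≠ 1 → a (i, 1) = 1 := by
      intro i hi
      have := hgen _ (Or.inl (Or.inl (Or.inr ⟨i, hi, rfl⟩)))
      have h2 : a (i, (1 : G)) - 1 = 0 := by simpa using this
      linarith
    have h11 : a ((1 : G), (1 : G)) = 1 := by
      obtain ⟨k, hk⟩ := Fintype.exists_ne_of_one_lt_card hcard2 (1 : G)
      have := hco 1 1 k
      simpa [hn1 k hk] using this
    have hn1' : ∀ j : G, a (1, j) = 1 := by
      intro j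
      by_cases hj : j = 1
      · subst hj; exact h11
      · exact hn1 j hj
    have hn2' : ∀ i : G, a (i, 1) = 1 := by
      intro i
      by_cases hi : i = 1
      · subst hi; exact h11
      · exact hn2 i hi
    -- row sums
    have hrow : ∀ i : G, i ≠ 1 → ∑ j : G, a (i, j) = 0 := by
      intro i hi
      have := hgen _ (Or.inr ⟨i, hi, rfl⟩)
      simpa using this
    -- define ψ
    set b : G → G → ℤ := fun i j => if a (i, j) = 1 then 1 else -1 with hb
    have hcastb : ∀ i j : G, ((b i j : ℤ) : ℚ) = a (i, j) := by
      intro i j; rcases hpm i j with h' | h' <;> norm_num [hb, h']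
    refine ⟨b, hcastb, ?_, ?_, ?_, ?_⟩
    · intro g h
      by_cases hh : a (g, h) = 1 <;> simp [hb, hh]
    · intro g h k
      have key : a (g, h) * a (g * h, k) = a (h, k) * a (g, h * k) := by
        have h1 := hco g h k
        have h2 : a (g * h, k) ^ 2 = 1 := hsq (g * h) k
        calc a (g, h) * a (g * h, k)
            = a (h, k) * a (g, h * k) * a (g * h, k) ^ 2 := by rw [h1]; ring
          _ = a (h, k) * a (g, h * k) := by rw [h2]; ring
      have : ((b g h * b (g * h) k : ℤ) : ℚ) = ((b h k * b g (h * k) : ℤ) : ℚ) := by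
        push_cast
        rw [hcastb, hcastb, hcastb, hcastb]
        exact key
      exact_mod_cast this
    · intro g
      constructor
      · have : ((b 1 g : ℤ) : ℚ) = 1 := by rw [hcastb]; exact hn1' g
        exact_mod_cast this
      · have : ((b g 1 : ℤ) : ℚ) = 1 := by rw [hcastb]; exact hn2' g
        exact_mod_cast this
    · ext g h
      have hsum : ∑ k : G, a (g, k) * a (h, k) = if g = h then (4 * t : ℚ) else 0 := by
        by_cases hgh : g = h
        · subst hgh
          simp only [if_pos rfl]
          have hone : ∀ k : G, a (g, k) * a (g, k) = 1 := by
            intro k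
            have h2 := hsq g k
            nlinarith
          rw [Finset.sum_congr rfl (fun k _ => hone k), Finset.sum_const,
            Finset.card_univ, hcard]
          push_cast
          ring
        · simp only [if_neg hgh]
          have hne : g * h⁻¹ ≠ 1 := fun hc => hgh (mul_inv_eq_one.mp hc)
          have step : ∀ k : G, a (g, k) * a (h, k)
              = a (g * h⁻¹, h) * a (g * h⁻¹, h * k) := by
            intro k
            have h1 := hco (g * h⁻¹) h k
            have heq : g * h⁻¹ * h = g := by group
            rw [heq] at h1
            have h2 : a (g * h⁻¹, h * k) ^ 2 = 1 := hsq (g * h⁻¹) (h * k)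
            calc a (g, k) * a (h, k)
                = a (g, k) * a (h, k) * a (g * h⁻¹, h * k) ^ 2 := by rw [h2]; ring
              _ = a (g * h⁻¹, h) * a (g * h⁻¹, h * k) := by rw [h1]; ring
          rw [Finset.sum_congr rfl (fun k _ => step k), ← Finset.mul_sum]
          have hre : ∑ k : G, a (g * h⁻¹, h * k) = ∑ m : G, a (g * h⁻¹, m) :=
            Fintype.sum_equiv (Equiv.mulLeft h) _ _ (fun k => rfl)
          rw [hre, hrow _ hne, mul_zero]
      have hZ : (∑ k : G, b g k * b h k) = (if g = h then (4 * t : ℤ) else 0) := by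
        have hq : ((∑ k : G, b g k * b h k : ℤ) : ℚ)
            = ((if g = h then (4 * t : ℤ) else 0 : ℤ) : ℚ) := by
          push_cast
          rw [Finset.sum_congr rfl (fun k _ => by rw [hcastb, hcastb]), hsum]
        exact_mod_cast hq
      simp only [Matrix.mul_apply, Matrix.of_apply, Matrix.transpose_apply,
        Matrix.smul_apply, Matrix.one_apply, smul_eq_mul]
      rw [hZ]
      by_cases hgh : g = h <;> simp [hgh]
  · rintro ⟨ψ, hcast, hpm, hco, hnorm, hH⟩
    have hsqZ : ∀ i j : G, ψ i j * ψ i j = 1 := by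
      intro i j; rcases hpm i j with h | h <;> simp [h]
    intro p hp
    rw [hadamardIdeal] at hp
    have hker : p ∈ RingHom.ker (eval a) := by
      refine Ideal.span_le.mpr ?_ hp
      rintro q (((( ⟨i, j, rfl⟩ | ⟨j, hj, rfl⟩) | ⟨i, hi, rfl⟩) | ⟨i, j, k, rfl⟩) | ⟨i, hi, rfl⟩) <;>
        simp only [SetLike.mem_coe, RingHom.mem_ker, map_sub, map_pow, _root_.map_mul, _root_.map_one, eval_X, map_sum]
      · have h2 : ψ i j ^ 2 = 1 := by rw [sq]; exact hsqZ i j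
        rw [← hcast i j, ← Int.cast_pow, h2]
        simp
      · rw [← hcast 1 j, (hnorm j).1]; simp
      · rw [← hcast i 1, (hnorm i).2]; simp
      · have key : ψ i j = ψ (i * j) k * ψ j k * ψ i (j * k) := by
          have h1 := hco i j k
          have h2 := hsqZ (i * j) k
          calc ψ i j = ψ i j * (ψ (i * j) k * ψ (i * j) k) := by rw [h2]; ring
            _ = (ψ i j * ψ (i * j) k) * ψ (i * j) k := by ring
            _ = (ψ j k * ψ i (j * k)) * ψ (i * j) k := by rw [h1]
            _ = ψ (i * j) k * ψ j k * ψ i (j * k) := by ring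
        rw [← hcast i j, ← hcast (i * j) k, ← hcast j k, ← hcast i (j * k), key]
        push_cast
        ring
      · have hrow : ∑ j : G, ψ i j = 0 := by
          have hent := congrFun (congrFun hH i) 1
          simp only [Matrix.mul_apply, Matrix.of_apply, Matrix.transpose_apply,
            Matrix.smul_apply, Matrix.one_apply, smul_eq_mul] at hent
          rw [if_neg hi, mul_zero] at hent
          rw [← hent]
          exact Finset.sum_congr rfl (fun k _ => by rw [(hnorm k).1, mul_one])
        have hq : ∑ j : G, a (i, j) = 0 := by
          have h1 : ((∑ j : G, ψ i j : ℤ) : ℚ) = 0 := by rw [hrow]; norm_num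
          rw [← h1]
          push_cast
          exact Finset.sum_congr rfl (fun j _ => (hcast i j).symm)
        simpa using hq
    simpa [RingHom.mem_ker] using hker
end

section
/- Let G be a finite group of order 4t and let I_G be the ideal of ℚ[x_{i,j} : (i,j) ∈ G × G] generated by: x_{i,j}² − 1 for all i,j ∈ G; x_{1,j} − 1 and x_{i,1} − 1 for all i,j ∈ G∖{1}; x_{i,j} − x_{ij,k}·x_{j,k}·x_{i,jk} for all i,j,k ∈ G; and Σ_{j∈G} x_{i,j} for all i ∈ G∖{1}. Then I_G is a radical ideal. -/
open MvPolynomial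

noncomputable section HadamardAux

variable {V : Type*} [Fintype V] [DecidableEq V]

/-- Sign of a boolean as a rational: `true ↦ 1`, `false ↦ -1`. -/
def hsgn (b : Bool) : ℚ := if b then 1 else -1

lemma hsgn_sq (b : Bool) : hsgn b * hsgn b = 1 := by cases b <;> simp [hsgn]

/-- The point of `ℚ^V` associated to a sign pattern. -/
def hpts (σ : V → Bool) : V → ℚ := fun v => hsgn (σ v)

/-- Evaluation at all sign points, as a ring hom to a product of fields. -/
def evAll : MvPolynomial V ℚ →+* ((V → Bool) → ℚ) :=
  Pi.ringHom fun σ => eval (hpts σ)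

lemma evAll_apply (p : MvPolynomial V ℚ) (σ : V → Bool) :
    evAll p σ = eval (hpts σ) p := rfl

/-- The interpolation idempotent attached to a sign pattern. -/
def hIdem (σ : V → Bool) : MvPolynomial V ℚ :=
  ∏ v, (C (1/2 : ℚ) * (1 + C (hsgn (σ v)) * X v))

/-- The ideal generated by `X v ^ 2 - 1`. -/
def sqIdeal : Ideal (MvPolynomial V ℚ) :=
  Ideal.span {p | ∃ v : V, p = X v ^ 2 - 1}

lemma eval_hIdem (σ τ : V → Bool) :
    eval (hpts τ) (hIdem σ) = if τ = σ then 1 else 0 := by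
  classical
  rw [hIdem, map_prod]
  have h : ∀ v : V, eval (hpts τ) (C (1/2:ℚ) * (1 + C (hsgn (σ v)) * X v))
      = if σ v = τ v then 1 else 0 := by
    intro v
    cases hσ : σ v <;> cases hτ : τ v <;>
      simp [hpts, hsgn, hσ, hτ] <;> norm_num
  simp only [h, Finset.prod_boole]
  by_cases hστ : τ = σ
  · simp [hστ]
  · have h2 : ¬ ∀ v ∈ Finset.univ, σ v = τ v := by
      intro hall
      exact hστ (funext fun v => ((hall v (Finset.mem_univ v)).symm))
    rw [if_neg h2, if_neg hστ]

lemma sum_hIdem : (∑ σ : V → Bool, hIdem σ) = (1 : MvPolynomial V ℚ) := by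
  classical
  unfold hIdem
  have h1 : ∀ v : V, (∑ b : Bool, C (1/2:ℚ) * (1 + C (hsgn b) * X v)) = 1 := by
    intro v
    rw [Fintype.sum_bool]
    have h2 : (C (hsgn true) : MvPolynomial V ℚ) = 1 := by simp [hsgn]
    have h3 : (C (hsgn false) : MvPolynomial V ℚ) = -1 := by simp [hsgn]
    have h4 : (C (1/2:ℚ) : MvPolynomial V ℚ) * 2 = 1 := by
      rw [show (2 : MvPolynomial V ℚ) = C 2 from (map_ofNat C 2).symm, ← map_mul]
      norm_num
    rw [h2, h3]
    linear_combination h4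
  rw [← Fintype.prod_sum (fun v b => C (1/2:ℚ) * (1 + C (hsgn b) * X v))]
  rw [Finset.prod_congr rfl fun v _ => h1 v, Finset.prod_const_one]

lemma X_sub_mul_hIdem_mem (σ : V → Bool) (v : V) :
    (X v - C (hsgn (σ v))) * hIdem σ ∈ (sqIdeal : Ideal (MvPolynomial V ℚ)) := by
  classical
  have hm : hIdem σ = (C (1/2:ℚ) * (1 + C (hsgn (σ v)) * X v)) *
      ∏ v' ∈ Finset.univ.erase v, (C (1/2:ℚ) * (1 + C (hsgn (σ v')) * X v')) := by
    rw [hIdem, ← Finset.mul_prod_erase _ _ (Finset.mem_univ v)]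
  have hs : C (hsgn (σ v)) * C (hsgn (σ v)) = (1 : MvPolynomial V ℚ) := by
    rw [← map_mul, hsgn_sq, map_one]
  have hfac : (X v - C (hsgn (σ v))) * (C (1/2:ℚ) * (1 + C (hsgn (σ v)) * X v))
      = (C (1/2:ℚ) * C (hsgn (σ v))) * (X v ^ 2 - 1) := by
    linear_combination (-(C (1/2:ℚ) * X v)) * hs
  have hXv : (X v ^ 2 - 1 : MvPolynomial V ℚ) ∈ (sqIdeal : Ideal (MvPolynomial V ℚ)) :=
    Ideal.subset_span ⟨v, rfl⟩
  rw [hm, ← mul_assoc, hfac, mul_assoc]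
  exact Ideal.mul_mem_left _ _ (Ideal.mul_mem_right _ _ hXv)

lemma sub_interp_mem (p : MvPolynomial V ℚ) :
    p - ∑ σ : V → Bool, evAll p σ • hIdem σ ∈ (sqIdeal : Ideal (MvPolynomial V ℚ)) := by
  classical
  induction p using MvPolynomial.induction_on with
  | C a =>
      have h1 : (∑ σ : V → Bool, evAll (C a) σ • hIdem σ) = C a := by
        simp only [evAll_apply, eval_C]
        rw [← Finset.smul_sum, sum_hIdem, smul_eq_C_mul, mul_one]
      rw [h1, sub_self]
      exact zero_mem _
  | add p q hp hq =>
      have h1 : (p + q) - ∑ σ : V → Bool, evAll (p + q) σ • hIdem σ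
          = (p - ∑ σ : V → Bool, evAll p σ • hIdem σ)
            + (q - ∑ σ : V → Bool, evAll q σ • hIdem σ) := by
        simp only [map_add, Pi.add_apply, add_smul, Finset.sum_add_distrib]
        ring
      rw [h1]
      exact add_mem hp hq
  | mul_X p v hp =>
      have he : ∀ σ : V → Bool, evAll (p * X v) σ = evAll p σ * hsgn (σ v) := by
        intro σ
        simp [evAll_apply, hpts]
      have hS : ∑ σ : V → Bool, evAll p σ • ((X v - C (hsgn (σ v))) * hIdem σ)
          = X v * (∑ σ : V → Bool, evAll p σ • hIdem σ)
            - ∑ σ : V → Bool, (evAll p σ * hsgn (σ v)) • hIdem σ := by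
        rw [Finset.mul_sum, ← Finset.sum_sub_distrib]
        refine Finset.sum_congr rfl fun σ _ => ?_
        simp only [smul_eq_C_mul, map_mul]
        ring
      have heq : p * X v - ∑ σ : V → Bool, evAll (p * X v) σ • hIdem σ
          = X v * (p - ∑ σ : V → Bool, evAll p σ • hIdem σ)
            + ∑ σ : V → Bool, evAll p σ • ((X v - C (hsgn (σ v))) * hIdem σ) := by
        simp only [he]
        rw [hS]
        ring
      rw [heq]
      refine add_mem (Ideal.mul_mem_left _ _ hp) (Ideal.sum_mem _ fun σ _ => ?_)
      rw [smul_eq_C_mul]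
      exact Ideal.mul_mem_left _ _ (X_sub_mul_hIdem_mem σ v)

lemma evAll_surjective : Function.Surjective (evAll (V := V)) := by
  classical
  intro a
  refine ⟨∑ σ : V → Bool, C (a σ) * hIdem σ, ?_⟩
  funext τ
  rw [evAll_apply, map_sum]
  simp only [map_mul, eval_C, eval_hIdem]
  simp

/-- Every ideal in a finite product of copies of `ℚ` is radical. -/
lemma pi_ideal_isRadical {S : Type*} (J : Ideal (S → ℚ)) : J.IsRadical := by
  intro a ha
  obtain ⟨n, hn⟩ := ha
  rcases n with _ | n
  · have : J = ⊤ := (Ideal.eq_top_iff_one J).2 (by simpa using hn)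
    simp [this]
  · have key : a = a ^ (n + 1) * (fun s => (a s)⁻¹) ^ n := by
      funext s
      simp only [Pi.mul_apply, Pi.pow_apply]
      by_cases h : a s = 0
      · simp [h]
      · rw [inv_pow, pow_succ, mul_comm (a s ^ n) (a s), mul_assoc,
          mul_inv_cancel₀ (pow_ne_zero n h), mul_one]
    rw [key]
    exact Ideal.mul_mem_right _ _ hn

end HadamardAux

/-- the ideal `I_G` is radical. -/
theorem hadamardIdeal_isRadical {G : Type*} [Group G] [Fintype G]
    (t : ℕ) (hcard : Fintype.card G = 4 * t) :
    (hadamardIdeal G).IsRadical := by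
  classical
  intro p hp
  obtain ⟨n, hn⟩ := hp
  have hJ0 : (sqIdeal : Ideal (MvPolynomial (G × G) ℚ)) ≤ hadamardIdeal G := by
    rw [sqIdeal, Ideal.span_le]
    rintro q ⟨v, rfl⟩
    exact Ideal.subset_span (Or.inl (Or.inl (Or.inl (Or.inl ⟨v.1, v.2, rfl⟩))))
  have hmem : evAll p ∈ (hadamardIdeal G).map (evAll (V := G × G)) := by
    refine pi_ideal_isRadical _ ⟨n, ?_⟩
    rw [← map_pow]
    exact Ideal.mem_map_of_mem _ hn
  obtain ⟨q, hqI, hq⟩ :=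
    (Ideal.mem_map_iff_of_surjective _ evAll_surjective).1 hmem
  have hpq : p - q ∈ (sqIdeal : Ideal (MvPolynomial (G × G) ℚ)) := by
    have h := sub_interp_mem (p - q)
    have hz : (∑ σ : (G × G) → Bool, evAll (p - q) σ • hIdem σ) = 0 := by
      refine Finset.sum_eq_zero fun σ _ => ?_
      rw [map_sub, Pi.sub_apply, hq, sub_self, zero_smul]
    rwa [hz, sub_zero] at h
  have : q + (p - q) ∈ hadamardIdeal G := add_mem hqI (hJ0 hpq)
  simpa using this
end

section
/- Let G be a finite group of order 4t and let I_G be the ideal of ℚ[x_{i,j} : (i,j) ∈ G × G] generated by: x_{i,j}² − 1 for all i,j ∈ G; x_{1,j} − 1 and x_{i,1} − 1 for all i,j ∈ G∖{1}; x_{i,j} − x_{ij,k}·x_{j,k}·x_{i,jk} for all i,j,k ∈ G; and Σ_{j∈G} x_{i,j} for all i ∈ G∖{1}. Then the number of normalized binary cocycles ψ over G whose cocyclic matrix M_ψ is Hadamard equals the dimension of ℚ[x_{i,j} : (i,j) ∈ G × G]/I_G as a ℚ-vector space. -/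
open Matrix MvPolynomial

/-!
Every `X (i, j) ^ 2 - 1` lies in `hadamardIdeal G`, so its zero locus `Z` sits inside the finite
grid `{1, -1} ^ (G × G)`. By Alon's combinatorial Nullstellensatz the polynomials vanishing on the
grid are combinations of the `X (i, j) ^ 2 - 1`; separating the grid points outside `Z` by elements
of the ideal then shows that the ideal is the whole vanishing ideal of `Z`. Hence the quotient is
the algebra of functions `Z → ℚ`, of dimension `|Z|`.

The points of `Z` are the normalized `±1` cocycles whose rows other than the first sum to zero.
For a cocycle, the inner product of rows `g` and `h` is `±` the sum of row `g * h⁻¹`, so these are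
exactly the normalized cocycles with a Hadamard cocyclic matrix.
-/

namespace MvPolynomial

variable {K σ : Type*} [Field K]

theorem exists_aeval_eq_one_and_aeval_eq_zero {V : Set (σ → K)} (hV : V.Finite) (v : σ → K) :
    ∃ p : MvPolynomial σ K, aeval v p = 1 ∧ ∀ w ∈ V, w ≠ v → aeval w p = 0 := by
  induction V, hV using Set.Finite.induction_on with
  | empty => exact ⟨1, by simp, by simp⟩
  | @insert w V _ _ ih =>
    obtain ⟨p, hpv, hpV⟩ := ih
    by_cases hwv : w = v
    · subst hwv
      exact ⟨p, hpv, fun u hu huw => hpV u (hu.resolve_left huw) huw⟩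
    obtain ⟨i, hi⟩ := Function.ne_iff.1 hwv
    refine ⟨C (v i - w i)⁻¹ * (X i - C (w i)) * p, ?_, ?_⟩
    · rw [map_mul, hpv]
      simp [inv_mul_cancel₀ (sub_ne_zero.2 hi.symm)]
    · rintro u (rfl | hu) huv
      · simp
      · rw [map_mul, hpV u hu huv, mul_zero]

noncomputable def evalOn (V : Set (σ → K)) : MvPolynomial σ K →ₐ[K] (V → K) :=
  AlgHom.pi fun x => aeval x.1

theorem ker_evalOn (V : Set (σ → K)) : RingHom.ker (evalOn V) = vanishingIdeal K V := by
  ext p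
  rw [RingHom.mem_ker]
  refine ⟨fun h x hx => congrFun h ⟨x, hx⟩, fun h => ?_⟩
  ext x
  exact h x.1 x.2

theorem evalOn_surjective {V : Set (σ → K)} (hV : V.Finite) : Function.Surjective (evalOn V) := by
  have := hV.fintype
  choose δ hδv hδV using exists_aeval_eq_one_and_aeval_eq_zero hV
  intro f
  refine ⟨∑ v : V, C (f v) * δ v, ?_⟩
  ext w
  simp only [evalOn, AlgHom.pi_apply, map_sum, map_mul, aeval_C, Algebra.algebraMap_self,
    RingHom.id_apply]
  rw [Finset.sum_eq_single w
    (fun v _ hvw => by rw [hδV v w w.2 (Subtype.coe_ne_coe.2 hvw.symm), mul_zero]) (by simp),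
    hδv, mul_one]

theorem finrank_quotient_vanishingIdeal {V : Set (σ → K)} (hV : V.Finite) :
    Module.finrank K (MvPolynomial σ K ⧸ vanishingIdeal K V) = Nat.card V := by
  have := hV.fintype
  rw [← ker_evalOn,
    (Ideal.quotientKerAlgEquivOfSurjective (evalOn_surjective hV)).toLinearEquiv.finrank_eq,
    Module.finrank_fintype_fun_eq_card, Nat.card_eq_fintype_card]

theorem exists_mem_aeval_eq_one {I : Ideal (MvPolynomial σ K)} {x : σ → K}
    (hx : x ∉ zeroLocus K I) : ∃ q ∈ I, aeval x q = 1 := by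
  obtain ⟨q, hq, hqx⟩ := not_forall₂.1 hx
  refine ⟨C (aeval x q)⁻¹ * q, I.mul_mem_left _ hq, ?_⟩
  rw [map_mul, aeval_C]
  exact inv_mul_cancel₀ hqx

theorem vanishingIdeal_inter_zeroLocus_le {I : Ideal (MvPolynomial σ K)} {W : Set (σ → K)}
    (hW : W.Finite) (hI : vanishingIdeal K W ≤ I) :
    vanishingIdeal K (W ∩ zeroLocus K I) ≤ I := by
  classical
  choose! q hqI hqx using fun x (hx : x ∉ zeroLocus K I) => exists_mem_aeval_eq_one hx
  intro p hp
  set F := hW.toFinset.filter (· ∉ zeroLocus K I)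
  -- each factor `1 - q x` is `1` modulo `I` and kills the point `x ∈ W` outside the zero locus
  have hr : p * ∏ x ∈ F, (1 - q x) ∈ I := hI fun x hx => by
    rw [map_mul, map_prod]
    by_cases hxI : x ∈ zeroLocus K I
    · rw [hp x ⟨hx, hxI⟩, zero_mul]
    · have hxF : x ∈ F := Finset.mem_filter.2 ⟨hW.mem_toFinset.2 hx, hxI⟩
      rw [Finset.prod_eq_zero hxF (by rw [map_sub, map_one, hqx x hxI, sub_self]), mul_zero]
  have hq : ∀ x ∈ F, Ideal.Quotient.mk I (1 - q x) = 1 := fun x hx => by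
    rw [map_sub, map_one, Ideal.Quotient.eq_zero_iff_mem.2 (hqI x (Finset.mem_filter.1 hx).2),
      sub_zero]
  rw [← Ideal.Quotient.eq_zero_iff_mem] at hr ⊢
  rwa [map_mul, map_prod, Finset.prod_eq_one hq, mul_one] at hr

theorem vanishingIdeal_pi_le_span [Finite σ] (S : σ → Finset K) (hS : ∀ i, (S i).Nonempty) :
    vanishingIdeal K (Set.univ.pi fun i => (S i : Set K)) ≤
      Ideal.span (Set.range fun i => ∏ r ∈ S i, (X i - C r)) := by
  intro p hp
  obtain ⟨h, -, rfl⟩ := combinatorial_nullstellensatz_exists_linearCombination S hS p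
    fun x hx => by simpa using hp x (by simpa using hx)
  rw [← Ideal.submodule_span_eq, ← Finsupp.range_linearCombination]
  exact LinearMap.mem_range_self _ h

theorem zeroLocus_subset_pi {I : Ideal (MvPolynomial σ K)} (S : σ → Finset K)
    (hI : ∀ i, ∏ r ∈ S i, (X i - C r) ∈ I) :
    zeroLocus K I ⊆ Set.univ.pi fun i => (S i : Set K) := fun x hx i _ => by
  simpa [Finset.prod_eq_zero_iff, sub_eq_zero] using hx _ (hI i)

section ProdMem

variable [Finite σ] {I : Ideal (MvPolynomial σ K)} (S : σ → Finset K)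

theorem eq_vanishingIdeal_zeroLocus_of_prod_mem (hS : ∀ i, (S i).Nonempty)
    (hI : ∀ i, ∏ r ∈ S i, (X i - C r) ∈ I) : I = vanishingIdeal K (zeroLocus K I) := by
  refine le_antisymm (le_vanishingIdeal_zeroLocus I) ?_
  rw [← Set.inter_eq_right.2 (zeroLocus_subset_pi S hI)]
  refine vanishingIdeal_inter_zeroLocus_le (Set.Finite.pi fun i => (S i).finite_toSet) ?_
  exact (vanishingIdeal_pi_le_span S hS).trans (Ideal.span_le.2 (Set.range_subset_iff.2 hI))

theorem finrank_quotient_eq_card_zeroLocus (hS : ∀ i, (S i).Nonempty)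
    (hI : ∀ i, ∏ r ∈ S i, (X i - C r) ∈ I) :
    Module.finrank K (MvPolynomial σ K ⧸ I) = Nat.card (zeroLocus K I) := by
  have hfin : (zeroLocus K I).Finite :=
    (Set.Finite.pi fun i => (S i).finite_toSet).subset (zeroLocus_subset_pi S hI)
  conv_lhs => rw [eq_vanishingIdeal_zeroLocus_of_prod_mem S hS hI]
  exact finrank_quotient_vanishingIdeal hfin

end ProdMem

end MvPolynomial

theorem mul_eq_mul_iff_eq_mul_mul {R : Type*} [CommRing R] {a b c d : R} (hb : b ^ 2 = 1) :
    a * b = c * d ↔ a = b * c * d := by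
  constructor <;> intro h
  · linear_combination b * h - a * hb
  · linear_combination b * h + c * d * hb

theorem exists_intCast_eq_of_sq_eq_one {R : Type*} [Ring R] [NoZeroDivisors R] {x : R}
    (hx : x ^ 2 = 1) : ∃ n : ℤ, (n : R) = x := by
  rcases sq_eq_one_iff.1 hx with rfl | rfl
  exacts [⟨1, Int.cast_one⟩, ⟨-1, by simp⟩]

section Cocycle

variable {G R : Type*} [Group G] [Fintype G] [CommRing R] {ψ : G → G → R}

-- the cocycle identity at `(g * h⁻¹, h, k)`, reindexed by `k ↦ h * k`
theorem sum_mul_mul_eq_of_cocycle (hsq : ∀ g h, ψ g h ^ 2 = 1)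
    (hcoc : ∀ g h k, ψ g h * ψ (g * h) k = ψ h k * ψ g (h * k)) (g h : G) :
    ∑ k, ψ g k * ψ h k = ψ (g * h⁻¹) h * ∑ k, ψ (g * h⁻¹) k := by
  set d := g * h⁻¹
  have key : ∀ k, ψ g k * ψ h k = ψ d h * ψ d (h * k) := fun k => by
    have E := hcoc d h k
    rw [inv_mul_cancel_right] at E
    linear_combination ψ d h * ψ h k * E - ψ g k * ψ h k * hsq d h +
      ψ d h * ψ d (h * k) * hsq h k
  rw [Finset.sum_congr rfl fun k _ => key k, ← Finset.mul_sum]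
  exact congrArg _ (Equiv.sum_comp (Equiv.mulLeft h) (ψ d))

theorem mul_transpose_eq_smul_one_iff [DecidableEq G] (hsq : ∀ g h, ψ g h ^ 2 = 1)
    (hcoc : ∀ g h k, ψ g h * ψ (g * h) k = ψ h k * ψ g (h * k)) (hrow : ∀ k, ψ 1 k = 1) :
    of ψ * (of ψ)ᵀ = (Fintype.card G : R) • 1 ↔ ∀ g, g ≠ 1 → ∑ k, ψ g k = 0 := by
  simp only [← Matrix.ext_iff, mul_apply, transpose_apply, of_apply, Matrix.smul_apply,
    one_apply, smul_eq_mul]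
  refine ⟨fun h g hg => by simpa [hrow, hg] using h g 1, fun h g g' => ?_⟩
  rw [sum_mul_mul_eq_of_cocycle hsq hcoc]
  split_ifs with hgg
  · simp [hgg, hrow]
  · rw [h _ (mul_inv_eq_one.not.2 hgg), mul_zero, mul_zero]

end Cocycle

section HadamardIdeal

variable {G : Type*} [Group G] [Fintype G]

def IsHadamardPoint {R : Type*} [CommRing R] (v : G × G → R) : Prop :=
  (∀ i j, v (i, j) ^ 2 = 1) ∧ (∀ j, j ≠ 1 → v (1, j) = 1) ∧ (∀ i, i ≠ 1 → v (i, 1) = 1) ∧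
    (∀ i j k, v (i, j) = v (i * j, k) * v (j, k) * v (i, j * k)) ∧ ∀ i, i ≠ 1 → ∑ j, v (i, j) = 0

theorem mem_zeroLocus_hadamardIdeal_iff {v : G × G → ℚ} :
    v ∈ zeroLocus ℚ (hadamardIdeal G) ↔ IsHadamardPoint v := by
  rw [hadamardIdeal, zeroLocus_span]
  simp [IsHadamardPoint, sub_eq_zero, and_assoc, or_imp, forall_and,
    forall_comm (α := MvPolynomial (G × G) ℚ)]

theorem prod_X_sub_C_mem_hadamardIdeal (i : G × G) :
    ∏ r ∈ ({1, -1} : Finset ℚ), (X i - C r) ∈ hadamardIdeal G := by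
  have hmem : X i ^ 2 - 1 ∈ hadamardIdeal G :=
    Ideal.subset_span (Or.inl (Or.inl (Or.inl (Or.inl ⟨i.1, i.2, rfl⟩))))
  rw [Finset.prod_pair (by norm_num)]
  convert hmem using 1
  simp only [map_one, map_neg]
  ring

theorem isHadamardPoint_comp_iff {R S : Type*} [CommRing R] [CommRing S] {f : R →+* S}
    (hf : Function.Injective f) {v : G × G → R} :
    IsHadamardPoint (f ∘ v) ↔ IsHadamardPoint v := by
  simp only [IsHadamardPoint, Function.comp_apply, ← map_pow, ← map_mul, ← map_sum,
    map_eq_one_iff f hf, map_eq_zero_iff f hf, hf.eq_iff]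

theorem isCocyclicHadamard_iff_isHadamardPoint {R : Type*} [CommRing R] [NoZeroDivisors R]
    [DecidableEq G] (hG : ∃ k : G, k ≠ 1) (ψ : G → G → R) :
    ((∀ g h, ψ g h = 1 ∨ ψ g h = -1) ∧ (∀ g h k, ψ g h * ψ (g * h) k = ψ h k * ψ g (h * k)) ∧
        (∀ g, ψ 1 g = 1 ∧ ψ g 1 = 1) ∧ of ψ * (of ψ)ᵀ = (Fintype.card G : R) • 1) ↔
      IsHadamardPoint (Function.uncurry ψ) := by
  simp only [IsHadamardPoint, Function.uncurry_apply_pair, ← sq_eq_one_iff]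
  constructor
  · rintro ⟨hsq, hcoc, hnorm, hH⟩
    exact ⟨hsq, fun j _ => (hnorm j).1, fun i _ => (hnorm i).2,
      fun g h k => (mul_eq_mul_iff_eq_mul_mul (hsq _ _)).1 (hcoc g h k),
      (mul_transpose_eq_smul_one_iff hsq hcoc fun k => (hnorm k).1).1 hH⟩
  · rintro ⟨hsq, hrow, hcol, hcoc, hsum⟩
    have hcoc' : ∀ g h k, ψ g h * ψ (g * h) k = ψ h k * ψ g (h * k) := fun g h k =>
      (mul_eq_mul_iff_eq_mul_mul (hsq _ _)).2 (hcoc g h k)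
    have h11 : ψ 1 1 = 1 := by
      obtain ⟨k, hk⟩ := hG
      simpa [hrow k hk] using hcoc 1 1 k
    have hnorm : ∀ g, ψ 1 g = 1 ∧ ψ g 1 = 1 := fun g => by
      rcases eq_or_ne g 1 with rfl | hg
      exacts [⟨h11, h11⟩, ⟨hrow g hg, hcol g hg⟩]
    exact ⟨hsq, hcoc', hnorm,
      (mul_transpose_eq_smul_one_iff hsq hcoc' fun k => (hnorm k).1).2 hsum⟩

theorem zeroLocus_hadamardIdeal_eq_image [DecidableEq G] (hG : ∃ k : G, k ≠ 1) :
    zeroLocus ℚ (hadamardIdeal G) = (fun ψ : G → G → ℤ => fun ij : G × G => (ψ ij.1 ij.2 : ℚ)) ''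
      {ψ | (∀ g h, ψ g h = 1 ∨ ψ g h = -1) ∧
        (∀ g h k, ψ g h * ψ (g * h) k = ψ h k * ψ g (h * k)) ∧
        (∀ g, ψ 1 g = 1 ∧ ψ g 1 = 1) ∧ of ψ * (of ψ)ᵀ = (Fintype.card G : ℤ) • 1} := by
  have hcast (ψ : G → G → ℤ) : IsHadamardPoint (Int.castRingHom ℚ ∘ Function.uncurry ψ) ↔
      IsHadamardPoint (Function.uncurry ψ) :=
    isHadamardPoint_comp_iff (Int.castRingHom ℚ).injective_int
  ext v
  simp only [Set.mem_image, Set.mem_ofPred_eq, isCocyclicHadamard_iff_isHadamardPoint hG,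
    mem_zeroLocus_hadamardIdeal_iff]
  constructor
  · intro hv
    choose ψ hψ using fun g h => exists_intCast_eq_of_sq_eq_one (hv.1 g h)
    have hv' : v = Int.castRingHom ℚ ∘ Function.uncurry ψ :=
      funext fun ij => (hψ ij.1 ij.2).symm
    exact ⟨ψ, (hcast ψ).1 (hv' ▸ hv), hv'.symm⟩
  · rintro ⟨ψ, hψ, rfl⟩
    exact (hcast ψ).2 hψ

end HadamardIdeal

/-- the number of normalized binary cocycles over `G` whose cocyclic matrix
is Hadamard equals `dim_ℚ (ℚ[X_G]/I_G)`. -/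
theorem card_cocyclic_hadamard_eq_finrank {G : Type*} [Group G] [Fintype G] [DecidableEq G]
    (t : ℕ) (hcard : Fintype.card G = 4 * t) :
    Nat.card {ψ : G → G → ℤ //
        (∀ g h : G, ψ g h = 1 ∨ ψ g h = -1) ∧
        (∀ g h k : G, ψ g h * ψ (g * h) k = ψ h k * ψ g (h * k)) ∧
        (∀ g : G, ψ 1 g = 1 ∧ ψ g 1 = 1) ∧
        (Matrix.of ψ) * (Matrix.of ψ)ᵀ = (4 * t : ℤ) • (1 : Matrix G G ℤ)} =
      Module.finrank ℚ (MvPolynomial (G × G) ℚ ⧸ hadamardIdeal G) := by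
  have hG : ∃ k : G, k ≠ 1 :=
    Fintype.exists_ne_of_one_lt_card (by have := Fintype.card_pos (α := G); omega) 1
  have hn : (4 * t : ℤ) = Fintype.card G := by rw [hcard]; push_cast; rfl
  rw [hn, finrank_quotient_eq_card_zeroLocus (fun _ => {1, -1})
      (fun _ => Finset.insert_nonempty _ _) prod_X_sub_C_mem_hadamardIdeal,
    zeroLocus_hadamardIdeal_eq_image hG, Nat.card_image_of_injective]
  · rfl
  · intro ψ ψ' hψ
    funext g h
    exact Int.cast_injective (congrFun hψ (g, h))
end

section
/- Let G be a finite multiplicative group, let s ∈ G with s ≠ 1, and let c, d ∈ G with c ≠ d. Then the generalized coboundary matrices M̄_c and M̄_d have the same set of negative entries in row s (i.e., {x ∈ G : M̄_c(s,x) = −1} = {x ∈ G : M̄_d(s,x) = −1}) if and only if s² = 1 and d = s·c. -/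
/-!
Negating row `d` of `∂_d` cancels the factor `δ_d(g)`, so every row of `M̄_d` is
`M̄_d(g, x) = δ_d(x) · δ_d(gx)`. For `s ≠ 1` the points `x = d` and `x = s⁻¹d` are distinct, so
the negative entries of row `s` are exactly `{d, s⁻¹d}`. Two such pairs for `c ≠ d` coincide only
crosswise, `c = s⁻¹d` and `d = s⁻¹c`, which says `s⁻¹ = s` and `d = sc`.
-/

variable {G : Type*} [Group G] [DecidableEq G]

/-- The characteristic map `δ_d`. -/
def charMap (d x : G) : ℤ := if x = d then -1 else 1

/-- The elementary coboundary `∂_d`. -/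
def elemCob (d g h : G) : ℤ := charMap d g * charMap d h * charMap d (g * h)

/-- The generalized coboundary matrix `M̄_d`: the matrix of `∂_d` with row `d` negated. -/
def genCob (d g h : G) : ℤ := if g = d then -(elemCob d g h) else elemCob d g h

theorem genCob_eq_charMap_mul_charMap (d g h : G) :
    genCob d g h = charMap d h * charMap d (g * h) := by
  unfold genCob elemCob
  split_ifs with hg
  · rw [hg, show charMap d d = -1 from if_pos rfl]
    ring
  · rw [show charMap d g = 1 from if_neg hg, one_mul]

theorem charMap_mul_charMap_eq_neg_one_iff {α : Type*} [DecidableEq α] (d x y : α) :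
    charMap d x * charMap d y = -1 ↔ (x = d ↔ y ≠ d) := by
  unfold charMap
  split_ifs <;> simp_all

theorem genCob_eq_neg_one_iff {s : G} (hs : s ≠ 1) (d x : G) :
    genCob d s x = -1 ↔ x = d ∨ s * x = d := by
  rw [genCob_eq_charMap_mul_charMap, charMap_mul_charMap_eq_neg_one_iff]
  have not_both : ¬(x = d ∧ s * x = d) := by
    rintro ⟨rfl, h⟩
    exact hs (mul_eq_right.mp h)
  tauto

theorem setOf_genCob_eq_neg_one {s : G} (hs : s ≠ 1) (d : G) :
    {x | genCob d s x = -1} = {d, s⁻¹ * d} := by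
  ext x
  simp [genCob_eq_neg_one_iff hs, eq_inv_mul_iff_mul_eq]

theorem eq_inv_mul_and_inv_mul_eq_iff {M : Type*} [Group M] {s c d : M} :
    c = s⁻¹ * d ∧ s⁻¹ * c = d ↔ s ^ 2 = 1 ∧ d = s * c := by
  constructor
  · rintro ⟨rfl, h⟩
    have hss : s * s = 1 := by
      rwa [← mul_assoc, mul_eq_right, ← mul_inv_rev, inv_eq_one] at h
    exact ⟨(sq s).trans hss, (mul_inv_cancel_left s d).symm⟩
  · rintro ⟨hs, rfl⟩
    have hinv : s⁻¹ = s := inv_eq_of_mul_eq_one_right ((sq s).symm.trans hs)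
    simp [hinv, ← mul_assoc, ← sq, hs]

/-- for `s ≠ 1` and `c ≠ d`, the matrices `M̄_c` and `M̄_d` share their
negative entries in row `s` iff `s² = 1` and `d = s·c`. -/
theorem genCob_share_negatives_iff (s c d : G) (hs : s ≠ 1) (hcd : c ≠ d) :
    {x : G | genCob c s x = -1} = {x : G | genCob d s x = -1} ↔ s ^ 2 = 1 ∧ d = s * c := by
  rw [setOf_genCob_eq_neg_one hs, setOf_genCob_eq_neg_one hs, Set.pair_eq_pair_iff,
    ← eq_inv_mul_and_inv_mul_eq_iff]
  simp [hcd]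
end
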